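/- arXiv:2509.19689 — 2 statements merged into one kernel-verified Lean document; each statement's English description precedes it below -/
import Mathlib

section
/- For all vectors u, v, w, ξ in V, the trace of the composite endomorphism c̃(u)∘c̃(v)∘c̃(w)∘c̃(ξ) of ΛV equals a₀²b₀²·[ξ(u)g(v,w) − ξ(v)g(u,w) + ξ(w)g(u,v)]·Tr(Id). -/
open scoped RealInnerProductSpace

noncomputable def eps {V : Type*} [NormedAddCommGroup V] [InnerProductSpace ℝ V]
    (v : V) : Module.End ℝ (ExteriorAlgebra ℝ V) :=
  LinearMap.mulLeft ℝ (ExteriorAlgebra.ι ℝ v)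

noncomputable def iot {V : Type*} [NormedAddCommGroup V] [InnerProductSpace ℝ V]
    (v : V) : Module.End ℝ (ExteriorAlgebra ℝ V) :=
  CliffordAlgebra.contractLeft (innerₛₗ ℝ v)

section Aux
variable {V : Type*} [NormedAddCommGroup V] [InnerProductSpace ℝ V]

local notation "T" => LinearMap.trace ℝ (ExteriorAlgebra ℝ V)

lemma End_neg_mul (A B : Module.End ℝ (ExteriorAlgebra ℝ V)) : -A * B = -(A * B) := rfl

lemma End_mul_neg (A B : Module.End ℝ (ExteriorAlgebra ℝ V)) : A * -B = -(A * B) := by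
  apply LinearMap.ext; intro z
  simp only [Module.End.mul_apply, LinearMap.neg_apply, map_neg]

lemma eps_anti (x y : V) : eps (V := V) x * eps y = -(eps y * eps x) := by
  have h : ExteriorAlgebra.ι ℝ x * ExteriorAlgebra.ι ℝ y
      = -(ExteriorAlgebra.ι ℝ y * ExteriorAlgebra.ι ℝ x) :=
    eq_neg_of_add_eq_zero_left (ExteriorAlgebra.ι_add_mul_swap x y)
  apply LinearMap.ext; intro z
  simp only [eps, Module.End.mul_apply, LinearMap.mulLeft_apply, LinearMap.neg_apply,
    ← mul_assoc, h, neg_mul]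

lemma iot_anti (x y : V) : iot (V := V) x * iot y = -(iot y * iot x) := by
  apply LinearMap.ext; intro z
  exact CliffordAlgebra.contractLeft_comm _ _ _

lemma iot_eps (x y : V) : iot (V := V) x * eps y = (⟪x,y⟫ : ℝ) • 1 - eps y * iot x := by
  apply LinearMap.ext; intro z
  have h := CliffordAlgebra.contractLeft_ι_mul (innerₛₗ ℝ x) y z
  simp only [iot, eps, Module.End.mul_apply, LinearMap.mulLeft_apply, LinearMap.sub_apply,
    LinearMap.smul_apply, Module.End.one_apply]
  exact h

lemma eps_iot (x y : V) : eps (V := V) y * iot x = (⟪x,y⟫ : ℝ) • 1 - iot x * eps y := by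
  rw [iot_eps, sub_sub_cancel]

lemma pushI (x y : V) (A : Module.End ℝ (ExteriorAlgebra ℝ V)) :
    iot x * (eps y * A) = (⟪x,y⟫ : ℝ) • A - eps y * (iot x * A) := by
  rw [← mul_assoc, iot_eps, sub_mul, smul_mul_assoc, one_mul, mul_assoc]

lemma pushE (x y : V) (A : Module.End ℝ (ExteriorAlgebra ℝ V)) :
    eps y * (iot x * A) = (⟪x,y⟫ : ℝ) • A - iot x * (eps y * A) := by
  rw [← mul_assoc, eps_iot, sub_mul, smul_mul_assoc, one_mul, mul_assoc]

lemma pushEE (x y : V) (A : Module.End ℝ (ExteriorAlgebra ℝ V)) :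
    eps (V := V) x * (eps y * A) = -(eps y * (eps x * A)) := by
  rw [← mul_assoc, eps_anti, End_neg_mul, mul_assoc]

lemma pushII (x y : V) (A : Module.End ℝ (ExteriorAlgebra ℝ V)) :
    iot (V := V) x * (iot y * A) = -(iot y * (iot x * A)) := by
  rw [← mul_assoc, iot_anti, End_neg_mul, mul_assoc]

lemma tr_comm (f g : Module.End ℝ (ExteriorAlgebra ℝ V)) : T (f * g) = T (g * f) :=
  LinearMap.trace_mul_comm ℝ f g

lemma tr_rot (A B C D : Module.End ℝ (ExteriorAlgebra ℝ V)) :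
    T (A * (B * (C * D))) = T (D * (A * (B * C))) := by
  rw [show A * (B * (C * D)) = (A * (B * C)) * D by noncomm_ring, tr_comm]

lemma tr_rot' (A B C D : Module.End ℝ (ExteriorAlgebra ℝ V)) :
    T (A * (B * (C * D))) = T (B * (C * (D * A))) := (tr_rot B C D A).symm

lemma trEE (a b : V) : T (eps a * eps b) = 0 := by
  have h := tr_comm (eps a) (eps b)
  rw [eps_anti b a, map_neg] at h
  linarith

lemma trII (a b : V) : T (iot a * iot b) = 0 := by
  have h := tr_comm (iot a) (iot b)
  rw [iot_anti b a, map_neg] at h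
  linarith

lemma trEI (a b : V) : T (eps a * iot b) = ⟪b,a⟫ / 2 * T 1 := by
  have h := tr_comm (iot b) (eps a)
  rw [iot_eps, map_sub, map_smul, smul_eq_mul] at h
  linarith

-- words with three eps, one iot
lemma trEEEI (a b c d : V) : T (eps a * (eps b * (eps c * iot d))) = 0 := by
  have h := tr_rot (eps a) (eps b) (eps c) (iot d)
  rw [pushI d a, pushI d b, iot_eps d c] at h
  simp only [mul_sub, mul_smul_comm, mul_one, map_sub, map_smul, smul_eq_mul,
    trEE, mul_zero, zero_sub, sub_neg_eq_add, zero_add] at h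
  linarith

lemma trEEIE (a b c d : V) : T (eps a * (eps b * (iot c * eps d))) = 0 := by
  rw [tr_rot]; exact trEEEI d a b c

lemma trEIEE (a b c d : V) : T (eps a * (iot b * (eps c * eps d))) = 0 := by
  rw [tr_rot, tr_rot]; exact trEEEI c d a b

lemma trIEEE (a b c d : V) : T (iot a * (eps b * (eps c * eps d))) = 0 := by
  rw [tr_rot']; exact trEEEI b c d a

-- words with one eps, three iot
lemma trEIII (a b c d : V) : T (eps a * (iot b * (iot c * iot d))) = 0 := by
  have h := tr_rot' (eps a) (iot b) (iot c) (iot d)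
  simp only [iot_eps d a, mul_sub, mul_smul_comm, mul_one, pushI c a, pushI b a,
    map_sub, map_smul, smul_eq_mul, trII, mul_zero, zero_sub, sub_neg_eq_add,
    zero_add] at h
  linarith

lemma trIEII (a b c d : V) : T (iot a * (eps b * (iot c * iot d))) = 0 := by
  rw [tr_rot']; exact trEIII b c d a

lemma trIIEI (a b c d : V) : T (iot a * (iot b * (eps c * iot d))) = 0 := by
  rw [tr_rot', tr_rot']; exact trEIII c d a b

lemma trIIIE (a b c d : V) : T (iot a * (iot b * (iot c * eps d))) = 0 := by
  rw [tr_rot]; exact trEIII d a b c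

-- all eps / all iot
lemma trEEEE (a b c d : V) : T (eps a * (eps b * (eps c * eps d))) = 0 := by
  have h := (tr_rot (eps a) (eps b) (eps c) (eps d)).symm
  rw [pushEE d a, pushEE d b, eps_anti d c] at h
  simp only [End_mul_neg, map_neg, neg_neg] at h
  linarith

lemma trIIII (a b c d : V) : T (iot a * (iot b * (iot c * iot d))) = 0 := by
  have h := (tr_rot (iot a) (iot b) (iot c) (iot d)).symm
  rw [pushII d a, pushII d b, iot_anti d c] at h
  simp only [End_mul_neg, map_neg, neg_neg] at h
  linarith

-- two eps, two iot
lemma trEEII (a b c d : V) :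
    T (eps a * (eps b * (iot c * iot d)))
      = (⟪c,b⟫ * ⟪d,a⟫ - ⟪c,a⟫ * ⟪d,b⟫) / 4 * T 1 := by
  have h1 : eps (V := V) a * (eps b * (iot c * iot d))
      = (⟪c,b⟫ : ℝ) • (eps a * iot d)
        - ((⟪c,a⟫ : ℝ) • (eps b * iot d) - iot c * (eps a * (eps b * iot d))) := by
    rw [pushE c b, mul_sub, mul_smul_comm, pushE c a]
  have e1 : T (eps a * (eps b * (iot c * iot d)))
      = ⟪c,b⟫ * T (eps a * iot d)
        - (⟪c,a⟫ * T (eps b * iot d) - T (iot c * (eps a * (eps b * iot d)))) := by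
    rw [h1]; simp only [map_sub, map_smul, smul_eq_mul]
  have e2 : T (iot c * (eps a * (eps b * iot d)))
      = - T (eps a * (eps b * (iot c * iot d))) := by
    rw [tr_rot', iot_anti d c, End_mul_neg, End_mul_neg, map_neg]
  rw [trEI a d, trEI b d] at e1
  linear_combination (e1 + e2) / 2

lemma trEIEI (a b c d : V) :
    T (eps a * (iot b * (eps c * iot d)))
      = (⟪b,c⟫ * ⟪d,a⟫ / 2 - (⟪b,c⟫ * ⟪d,a⟫ - ⟪b,a⟫ * ⟪d,c⟫) / 4) * T 1 := by
  have h1 : eps (V := V) a * (iot b * (eps c * iot d))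
      = (⟪b,c⟫ : ℝ) • (eps a * iot d) - eps a * (eps c * (iot b * iot d)) := by
    rw [pushI b c, mul_sub, mul_smul_comm]
  rw [h1, map_sub, map_smul, smul_eq_mul, trEI a d, trEEII a c b d]
  ring

lemma trEIIE (a b c d : V) :
    T (eps a * (iot b * (iot c * eps d)))
      = (⟪b,a⟫ * ⟪c,d⟫ - ⟪b,d⟫ * ⟪c,a⟫) / 4 * T 1 := by
  rw [tr_rot, trEEII d a b c]

lemma trIEEI (a b c d : V) :
    T (iot a * (eps b * (eps c * iot d)))
      = (⟪d,c⟫ * ⟪a,b⟫ - ⟪d,b⟫ * ⟪a,c⟫) / 4 * T 1 := by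
  rw [tr_rot', tr_rot', trEIIE c d a b]

lemma trIEIE (a b c d : V) :
    T (iot a * (eps b * (iot c * eps d)))
      = (⟪a,b⟫ * ⟪c,d⟫ / 2 - (⟪a,b⟫ * ⟪c,d⟫ - ⟪a,d⟫ * ⟪c,b⟫) / 4) * T 1 := by
  rw [tr_rot, trEIEI d a b c]

lemma trIIEE (a b c d : V) :
    T (iot a * (iot b * (eps c * eps d)))
      = (⟪a,d⟫ * ⟪b,c⟫ - ⟪a,c⟫ * ⟪b,d⟫) / 4 * T 1 := by
  rw [tr_rot, trEIIE d a b c]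

end Aux

noncomputable def ctil {V : Type*} [NormedAddCommGroup V] [InnerProductSpace ℝ V]
    (a₀ b₀ : ℝ) (v : V) : Module.End ℝ (ExteriorAlgebra ℝ V) :=
  a₀ • eps v - b₀ • iot v

noncomputable def cbar {V : Type*} [NormedAddCommGroup V] [InnerProductSpace ℝ V]
    (a₀ b₀ : ℝ) (v : V) : Module.End ℝ (ExteriorAlgebra ℝ V) :=
  b₀ • eps v - a₀ • iot v

noncomputable def cmap {V : Type*} [NormedAddCommGroup V] [InnerProductSpace ℝ V]
    (v : V) : Module.End ℝ (ExteriorAlgebra ℝ V) :=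
  eps v - iot v

noncomputable def chat {V : Type*} [NormedAddCommGroup V] [InnerProductSpace ℝ V]
    (v : V) : Module.End ℝ (ExteriorAlgebra ℝ V) :=
  eps v + iot v

theorem statement_5 {V : Type*} [NormedAddCommGroup V] [InnerProductSpace ℝ V]
    [FiniteDimensional ℝ V] (a₀ b₀ : ℝ) (u v w ξ : V) :
    LinearMap.trace ℝ (ExteriorAlgebra ℝ V) (ctil a₀ b₀ u * ctil a₀ b₀ v * ctil a₀ b₀ w * ctil a₀ b₀ ξ) =
      a₀ ^ 2 * b₀ ^ 2 * (⟪ξ, u⟫ * ⟪v, w⟫ - ⟪ξ, v⟫ * ⟪u, w⟫ + ⟪ξ, w⟫ * ⟪u, v⟫) * LinearMap.trace ℝ (ExteriorAlgebra ℝ V) 1 := by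
  simp only [ctil]
  simp only [sub_mul, mul_sub, smul_mul_assoc, mul_smul_comm, smul_smul, mul_assoc]
  simp only [map_sub, map_smul, smul_eq_mul]
  rw [trEEEE, trEEEI, trEEIE, trEIEE, trIEEE, trEIII, trIEII, trIIEI, trIIIE, trIIII,
    trEEII, trEIEI, trEIIE, trIEEI, trIEIE, trIIEE]
  simp only [real_inner_comm ξ u, real_inner_comm ξ v, real_inner_comm ξ w,
    real_inner_comm w u, real_inner_comm w v, real_inner_comm v u]
  ring
end

section
/- For all vectors ξ, X in V, the following identity of endomorphisms of ΛV holds: ε(ξ)∘ι(ξ) ∘ (c̄(ξ)∘c(X) + c(X)∘c̃(ξ)) ∘ ε(ξ)∘ι(ξ) = −2b₀·|ξ|²·ξ(X)·ε(ξ)∘ι(ξ). -/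
open scoped RealInnerProductSpace

section Aux

variable {V : Type*} [NormedAddCommGroup V] [InnerProductSpace ℝ V]

lemma eps_mul_eps_self (v : V) : eps v * eps (v : V) = 0 := by
  refine LinearMap.ext fun x => ?_
  simp [eps, ← mul_assoc]

lemma iot_mul_iot (v w : V) : iot v * iot w = - (iot w * iot v) := by
  refine LinearMap.ext fun x => ?_
  simpa [iot] using CliffordAlgebra.contractLeft_comm (Q := (0 : QuadraticForm ℝ V))
    (innerₛₗ ℝ v) (innerₛₗ ℝ w) x

lemma iot_mul_iot_self (v : V) : iot v * iot (v : V) = 0 := by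
  refine LinearMap.ext fun x => ?_
  simpa [iot] using CliffordAlgebra.contractLeft_contractLeft (Q := (0 : QuadraticForm ℝ V))
    (innerₛₗ ℝ v) x

lemma iot_mul_eps (v w : V) : iot v * eps w = ⟪v, w⟫ • 1 - eps w * iot v := by
  refine LinearMap.ext fun x => ?_
  simpa [eps, iot] using CliffordAlgebra.contractLeft_ι_mul (Q := (0 : QuadraticForm ℝ V))
    (innerₛₗ ℝ v) w x

lemma eps_mul_eps (v w : V) : eps v * eps w = - (eps w * eps v) := by
  refine LinearMap.ext fun x => ?_
  simp only [eps, Module.End.mul_apply, LinearMap.mulLeft_apply, LinearMap.neg_apply,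
    ← mul_assoc]
  rw [eq_neg_of_add_eq_zero_left (ExteriorAlgebra.ι_add_mul_swap v w)]
  simp

end Aux

theorem statement_10 {V : Type*} [NormedAddCommGroup V] [InnerProductSpace ℝ V]
    [FiniteDimensional ℝ V] (a₀ b₀ : ℝ) (ξ X : V) :
    eps ξ * iot ξ * (cbar a₀ b₀ ξ * cmap X + cmap X * ctil a₀ b₀ ξ) * (eps ξ * iot ξ) =
      (-(2 * b₀) * ⟪ξ, ξ⟫ * ⟪ξ, X⟫) • (eps ξ * iot ξ) := by
  set E := eps ξ with hE
  set I := iot ξ with hI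
  set F := eps X with hF
  set J := iot X with hJ
  have hE2 : E * E = 0 := eps_mul_eps_self ξ
  have hI2 : I * I = 0 := iot_mul_iot_self ξ
  have hIE : I * E = ⟪ξ, ξ⟫ • 1 - E * I := iot_mul_eps ξ ξ
  have hJE : J * E = ⟪X, ξ⟫ • 1 - E * J := iot_mul_eps X ξ
  have hIF : I * F = ⟪ξ, X⟫ • 1 - F * I := iot_mul_eps ξ X
  have hIJ : I * J = -(J * I) := iot_mul_iot ξ X
  have hEF : E * F = -(F * E) := eps_mul_eps ξ X
  have hEIE : E * I * E = ⟪ξ, ξ⟫ • E := by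
    rw [mul_assoc, hIE, mul_sub, mul_smul_comm, mul_one, ← mul_assoc, hE2, zero_mul, sub_zero]
  have hIEI : I * E * I = ⟪ξ, ξ⟫ • I := by
    rw [hIE, sub_mul, smul_mul_assoc, one_mul, mul_assoc, hI2, mul_zero, sub_zero]
  have hEFE : E * F * E = 0 := by
    rw [hEF]
    exact (neg_mul (F * E) E).trans (by rw [mul_assoc, hE2, mul_zero]; exact neg_zero)
  have hEJE : E * J * E = ⟪X, ξ⟫ • E := by
    rw [mul_assoc, hJE, mul_sub, mul_smul_comm, mul_one, ← mul_assoc, hE2, zero_mul, sub_zero]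
  have hIFI : I * F * I = ⟪ξ, X⟫ • I := by
    rw [hIF, sub_mul, smul_mul_assoc, one_mul, mul_assoc, hI2, mul_zero, sub_zero]
  have hIJI : I * J * I = 0 := by
    rw [hIJ]
    exact (neg_mul (J * I) I).trans (by rw [mul_assoc, hI2, mul_zero]; exact neg_zero)
  have hL : E * I * cbar a₀ b₀ ξ = (b₀ * ⟪ξ, ξ⟫) • E := by
    rw [cbar, ← hE, ← hI, mul_sub, mul_smul_comm, mul_smul_comm, hEIE,
      mul_assoc, hI2, mul_zero, smul_zero, sub_zero, smul_smul]
  have hR : ctil a₀ b₀ ξ * (E * I) = (-(b₀ * ⟪ξ, ξ⟫)) • I := by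
    rw [ctil, ← hE, ← hI, sub_mul, smul_mul_assoc, smul_mul_assoc, ← mul_assoc, hE2,
      zero_mul, smul_zero, ← mul_assoc, hIEI, zero_sub, smul_smul]
    exact (neg_smul _ _).symm
  have hECE : E * cmap X * E = (-⟪X, ξ⟫) • E := by
    rw [cmap, ← hF, ← hJ, mul_sub, sub_mul, hEFE, hEJE, zero_sub]
    exact (neg_smul _ _).symm
  have hICI : I * cmap X * I = ⟪ξ, X⟫ • I := by
    rw [cmap, ← hF, ← hJ, mul_sub, sub_mul, hIFI, hIJI, sub_zero]
  have t1 : E * I * (cbar a₀ b₀ ξ * cmap X) * (E * I)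
      = (b₀ * ⟪ξ, ξ⟫ * -⟪X, ξ⟫) • (E * I) := by
    have assoc : E * I * (cbar a₀ b₀ ξ * cmap X) * (E * I)
        = (E * I * cbar a₀ b₀ ξ) * (cmap X) * E * I := by noncomm_ring
    rw [assoc, hL, smul_mul_assoc, smul_mul_assoc, smul_mul_assoc, hECE,
      smul_mul_assoc, smul_smul]
  have t2 : E * I * (cmap X * ctil a₀ b₀ ξ) * (E * I)
      = (-(b₀ * ⟪ξ, ξ⟫) * ⟪ξ, X⟫) • (E * I) := by
    have assoc : E * I * (cmap X * ctil a₀ b₀ ξ) * (E * I)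
        = (E * I * cmap X) * (ctil a₀ b₀ ξ * (E * I)) := by noncomm_ring
    have assoc2 : E * I * cmap X * I = E * (I * cmap X * I) := by noncomm_ring
    rw [assoc, hR, mul_smul_comm, assoc2, hICI, mul_smul_comm, smul_smul]
  have expand : E * I * (cbar a₀ b₀ ξ * cmap X + cmap X * ctil a₀ b₀ ξ) * (E * I)
      = E * I * (cbar a₀ b₀ ξ * cmap X) * (E * I)
        + E * I * (cmap X * ctil a₀ b₀ ξ) * (E * I) := by
    rw [mul_add, add_mul]
  rw [expand, t1, t2, ← add_smul]
  congr 1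
  rw [real_inner_comm X ξ]
  ring
end
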